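/- arXiv:1201.4141 — 2 statements merged into one kernel-verified Lean document; each statement's English description precedes it below -/
import Mathlib

section
/- Let ν¹ = ν*¹ + iν̃¹ and ν² = ν*² + iν̃² be complex eigenvectors of B = Aᵀ with eigenvalues λ₁ = λ₁* + iλ̃₁ and λ₂ = λ₂* + iλ̃₂ satisfying λ₁*λ̃₂ = λ₂*λ̃₁ (so that λ̃₁, λ̃₂ combine to cancel). Then F(x) = λ̃₁ · arctan((ν̃²·x)/(ν*²·x)) − λ̃₂ · arctan((ν̃¹·x)/(ν*¹·x)) is an autonomous first integral of dx/dt = Ax on any open set where ν*¹·x ≠ 0, ν*²·x ≠ 0, provided λ₁* = λ₂* = 0 or more generally the real parts of λ̃₁λ₂ − λ̃₂λ₁ vanish. -/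
/-!
Writing `s = ν* ⬝ x`, `t = ν̃ ⬝ x` for a complex left eigenvector `ν* + iν̃` of `A` with eigenvalue
`λ* + iλ̃`, the flow `ẋ = Ax` gives `ṡ = λ* s - λ̃ t` and `ṫ = λ̃ s + λ* t`, hence
`d/dt arctan (t / s) = (s ṫ - t ṡ) / (s² + t²) = λ̃`: the angle turns at the constant rate `λ̃`.
So `F` has Lie derivative `λ̃₁ λ̃₂ - λ̃₂ λ̃₁ = 0`.
-/

open Matrix

theorem HasFDerivAt.arctan_div {E : Type*} [NormedAddCommGroup E] [NormedSpace ℝ E]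
    {f g : E → ℝ} {f' g' : E →L[ℝ] ℝ} {x : E}
    (hf : HasFDerivAt f f' x) (hg : HasFDerivAt g g' x) (hx : g x ≠ 0) :
    HasFDerivAt (fun y => Real.arctan (f y / g y))
      ((g x ^ 2 + f x ^ 2)⁻¹ • (g x • f' - f x • g')) x := by
  have hq := (hf.fun_mul ((hasFDerivAt_inv hx).comp x hg)).arctan
  simp only [← div_eq_mul_inv, Function.comp_def] at hq
  convert hq using 1
  ext v
  simp only [_root_.smul_apply, _root_.sub_apply, smul_eq_mul, one_div, smul_add, _root_.add_apply,
    ContinuousLinearMap.comp_apply, ContinuousLinearMap.toSpanSingleton_apply, mul_neg]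
  field_simp
  ring

section DotProduct

variable {ι : Type*} [Fintype ι]

theorem hasFDerivAt_dotProduct (v x : ι → ℝ) :
    HasFDerivAt (v ⬝ᵥ ·) (dotProductBilin ℝ ℝ v).toContinuousLinearMap x :=
  (dotProductBilin ℝ ℝ v).toContinuousLinearMap.hasFDerivAt

theorem vecMul_re_im_of_transpose_mulVec_eq_smul (A : Matrix ι ι ℝ) (νs νt : ι → ℝ) (ls lt : ℝ)
    (h : (A.map Complex.ofReal)ᵀ *ᵥ (fun i => (νs i : ℂ) + νt i * Complex.I)
      = ((ls : ℂ) + lt * Complex.I) • (fun i => (νs i : ℂ) + νt i * Complex.I)) :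
    νs ᵥ* A = ls • νs - lt • νt ∧ νt ᵥ* A = lt • νs + ls • νt := by
  have hre := fun i => congrArg Complex.re (congrFun h i)
  have him := fun i => congrArg Complex.im (congrFun h i)
  simp only [mulVec, dotProduct, transpose_apply, map_apply, Complex.re_sum, Complex.im_sum,
    Complex.add_re, Complex.add_im, Complex.mul_re, Complex.mul_im, Complex.ofReal_re,
    Complex.ofReal_im, Complex.I_re, Complex.I_im, Pi.smul_apply, smul_eq_mul, mul_zero, mul_one,
    zero_mul, sub_self, sub_zero, add_zero, zero_add] at hre him
  constructor <;> funext i <;> simp only [vecMul, dotProduct, mul_comm (_ : ℝ) (A _ i)]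
  · simp [hre i]
  · simp [him i]
    ring

theorem hasFDerivAt_arctan_dotProduct_div (νs νt : ι → ℝ) {x : ι → ℝ} (hx : νs ⬝ᵥ x ≠ 0) :
    HasFDerivAt (fun y => Real.arctan ((νt ⬝ᵥ y) / (νs ⬝ᵥ y)))
      (((νs ⬝ᵥ x) ^ 2 + (νt ⬝ᵥ x) ^ 2)⁻¹ •
        ((νs ⬝ᵥ x) • (dotProductBilin ℝ ℝ νt).toContinuousLinearMap -
          (νt ⬝ᵥ x) • (dotProductBilin ℝ ℝ νs).toContinuousLinearMap)) x :=
  (hasFDerivAt_dotProduct νt x).arctan_div (hasFDerivAt_dotProduct νs x) hx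

theorem fderiv_arctan_dotProduct_div_mulVec (A : Matrix ι ι ℝ) {νs νt : ι → ℝ} {ls lt : ℝ}
    (hs : νs ᵥ* A = ls • νs - lt • νt) (ht : νt ᵥ* A = lt • νs + ls • νt) {x : ι → ℝ}
    (hx : νs ⬝ᵥ x ≠ 0) :
    fderiv ℝ (fun y => Real.arctan ((νt ⬝ᵥ y) / (νs ⬝ᵥ y))) x (A *ᵥ x) = lt := by
  rw [(hasFDerivAt_arctan_dotProduct_div νs νt hx).fderiv]
  simp only [_root_.smul_apply, _root_.sub_apply, LinearMap.coe_toContinuousLinearMap',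
    dotProductBilin_apply_apply, dotProduct_mulVec, hs, ht, sub_dotProduct, add_dotProduct,
    smul_dotProduct, smul_eq_mul]
  field_simp
  ring

end DotProduct

theorem first_integral_two_complex_eigenvectors_general
    (n : ℕ) (A : Matrix (Fin n) (Fin n) ℝ)
    (νs₁ νt₁ νs₂ νt₂ : Fin n → ℝ) (lams₁ lamt₁ lams₂ lamt₂ : ℝ)
    (heig₁ : (A.map Complex.ofReal)ᵀ.mulVec (fun i => (νs₁ i : ℂ) + νt₁ i * Complex.I)
      = ((lams₁ : ℂ) + lamt₁ * Complex.I) • (fun i => (νs₁ i : ℂ) + νt₁ i * Complex.I))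
    (heig₂ : (A.map Complex.ofReal)ᵀ.mulVec (fun i => (νs₂ i : ℂ) + νt₂ i * Complex.I)
      = ((lams₂ : ℂ) + lamt₂ * Complex.I) • (fun i => (νs₂ i : ℂ) + νt₂ i * Complex.I)) :
    ∀ x : Fin n → ℝ, νs₁ ⬝ᵥ x ≠ 0 → νs₂ ⬝ᵥ x ≠ 0 →
      fderiv ℝ (fun y => lamt₁ * Real.arctan ((νt₂ ⬝ᵥ y) / (νs₂ ⬝ᵥ y))
          - lamt₂ * Real.arctan ((νt₁ ⬝ᵥ y) / (νs₁ ⬝ᵥ y)))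
        x (A.mulVec x) = 0 := by
  intro x h₁ h₂
  obtain ⟨hs₁, ht₁⟩ := vecMul_re_im_of_transpose_mulVec_eq_smul A νs₁ νt₁ lams₁ lamt₁ heig₁
  obtain ⟨hs₂, ht₂⟩ := vecMul_re_im_of_transpose_mulVec_eq_smul A νs₂ νt₂ lams₂ lamt₂ heig₂
  have d₁ := (hasFDerivAt_arctan_dotProduct_div νs₁ νt₁ h₁).differentiableAt
  have d₂ := (hasFDerivAt_arctan_dotProduct_div νs₂ νt₂ h₂).differentiableAt
  rw [fderiv_fun_sub (d₂.const_mul _) (d₁.const_mul _), fderiv_const_mul d₂, fderiv_const_mul d₁]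
  simp only [_root_.sub_apply, _root_.smul_apply, smul_eq_mul,
    fderiv_arctan_dotProduct_div_mulVec A hs₁ ht₁ h₁,
    fderiv_arctan_dotProduct_div_mulVec A hs₂ ht₂ h₂]
  ring

/-- Theorem 1.4: for complex eigenvectors `ν¹, ν²` of `Aᵀ` with eigenvalues
`λ₁ = λ₁* + iλ̃₁`, `λ₂ = λ₂* + iλ̃₂` satisfying `λ₁*λ̃₂ = λ₂*λ̃₁`, the function
`F(x) = λ̃₁·arctan((ν̃²·x)/(ν*²·x)) − λ̃₂·arctan((ν̃¹·x)/(ν*¹·x))` is an autonomous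
first integral of `dx/dt = Ax` wherever `ν*¹·x ≠ 0` and `ν*²·x ≠ 0`. -/
theorem first_integral_two_complex_eigenvectors
    (n : ℕ) (A : Matrix (Fin n) (Fin n) ℝ)
    (νs₁ νt₁ νs₂ νt₂ : Fin n → ℝ) (lams₁ lamt₁ lams₂ lamt₂ : ℝ)
    (hν₁ : (fun i => (νs₁ i : ℂ) + νt₁ i * Complex.I) ≠ (0 : Fin n → ℂ))
    (hν₂ : (fun i => (νs₂ i : ℂ) + νt₂ i * Complex.I) ≠ (0 : Fin n → ℂ))
    (heig₁ : (A.map Complex.ofReal)ᵀ.mulVec (fun i => (νs₁ i : ℂ) + νt₁ i * Complex.I)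
      = ((lams₁ : ℂ) + lamt₁ * Complex.I) • (fun i => (νs₁ i : ℂ) + νt₁ i * Complex.I))
    (heig₂ : (A.map Complex.ofReal)ᵀ.mulVec (fun i => (νs₂ i : ℂ) + νt₂ i * Complex.I)
      = ((lams₂ : ℂ) + lamt₂ * Complex.I) • (fun i => (νs₂ i : ℂ) + νt₂ i * Complex.I))
    (hre : lams₁ * lamt₂ = lams₂ * lamt₁) :
    ∀ x : Fin n → ℝ, νs₁ ⬝ᵥ x ≠ 0 → νs₂ ⬝ᵥ x ≠ 0 →
      fderiv ℝ (fun y => lamt₁ * Real.arctan ((νt₂ ⬝ᵥ y) / (νs₂ ⬝ᵥ y))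
          - lamt₂ * Real.arctan ((νt₁ ⬝ᵥ y) / (νs₁ ⬝ᵥ y)))
        x (A.mulVec x) = 0 :=
  first_integral_two_complex_eigenvectors_general n A νs₁ νt₁ νs₂ νt₂ lams₁ lamt₁ lams₂ lamt₂ heig₁
    heig₂
end

section
/- Let λ be a real eigenvalue of B = Aᵀ with a real eigenvector ν⁰ and a real generalized eigenvector ν¹ of first order, i.e. (B − λI)ν¹ = ν⁰. Then F(x) = (ν⁰·x) · exp(−λ · (ν¹·x)/(ν⁰·x)) is an autonomous first integral of dx/dt = Ax on any open set where ν⁰·x ≠ 0. -/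
/-!
Write `u = ν⁰·x` and `w = ν¹·x`. Along `x' = Ax` we have `u' = λu` and `w' = λw + u`,
so the quotient `w/u` grows at unit speed, `(w/u)' = 1`. Hence
`(log |F|)' = u'/u − λ (w/u)' = λ − λ = 0`.
-/

section
variable {E : Type*} [NormedAddCommGroup E] [NormedSpace ℝ E] {u w : E → ℝ}
  {u' w' : E →L[ℝ] ℝ} {x : E}

theorem HasFDerivAt.fun_div (hw : HasFDerivAt w w' x) (hu : HasFDerivAt u u' x) (hx : u x ≠ 0) :
    HasFDerivAt (fun y => w y / u y) ((u x ^ 2)⁻¹ • (u x • w' - w x • u')) x := by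
  simp only [div_eq_mul_inv]
  refine (hw.fun_mul ((hasDerivAt_inv hx).comp_hasFDerivAt x hu)).congr_fderiv ?_
  ext v
  simp only [smul_apply, sub_apply, add_apply, smul_eq_mul, Function.comp_apply]
  field_simp
  ring

theorem fderiv_mul_exp_div_apply_eq_zero {v : E} {lam : ℝ} (hu : HasFDerivAt u u' x)
    (hw : HasFDerivAt w w' x) (hx : u x ≠ 0) (huv : u' v = lam * u x)
    (hwv : w' v = lam * w x + u x) :
    fderiv ℝ (fun y => u y * Real.exp (-lam * (w y / u y))) x v = 0 := by
  have hquot : ((u x ^ 2)⁻¹ • (u x • w' - w x • u')) v = 1 := by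
    simp only [smul_apply, sub_apply, smul_eq_mul, huv, hwv]
    field_simp
    ring
  rw [(hu.fun_mul ((hw.fun_div hu hx).const_mul (-lam)).exp).fderiv]
  simp only [add_apply, smul_apply, smul_eq_mul, hquot, huv]
  ring

end

open Matrix

theorem hasFDerivAt_dotProduct_s11 {ι : Type*} [Fintype ι] (ν x : ι → ℝ) :
    HasFDerivAt (ν ⬝ᵥ ·) (LinearMap.toContinuousLinearMap (dotProductBilin ℝ ℝ ν)) x :=
  (LinearMap.toContinuousLinearMap (dotProductBilin ℝ ℝ ν)).hasFDerivAt

namespace Matrix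

variable {ι R : Type*} [Fintype ι]

theorem dotProduct_mulVec_eq_transpose_mulVec_dotProduct [CommSemiring R]
    (A : Matrix ι ι R) (ν x : ι → R) : ν ⬝ᵥ A *ᵥ x = Aᵀ *ᵥ ν ⬝ᵥ x := by
  rw [dotProduct_mulVec, mulVec_transpose]

theorem dotProduct_mulVec_of_transpose_mulVec_eq_smul [CommSemiring R] {A : Matrix ι ι R}
    {ν : ι → R} {lam : R} (h : Aᵀ *ᵥ ν = lam • ν) (x : ι → R) :
    ν ⬝ᵥ A *ᵥ x = lam * (ν ⬝ᵥ x) := by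
  rw [dotProduct_mulVec_eq_transpose_mulVec_dotProduct, h, smul_dotProduct, smul_eq_mul]

theorem dotProduct_mulVec_of_transpose_mulVec_sub_smul_eq [CommRing R] {A : Matrix ι ι R}
    {ν₀ ν₁ : ι → R} {lam : R} (h : Aᵀ *ᵥ ν₁ - lam • ν₁ = ν₀) (x : ι → R) :
    ν₁ ⬝ᵥ A *ᵥ x = lam * (ν₁ ⬝ᵥ x) + ν₀ ⬝ᵥ x := by
  rw [dotProduct_mulVec_eq_transpose_mulVec_dotProduct, ← h, sub_dotProduct, smul_dotProduct,
    smul_eq_mul]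
  ring

end Matrix

theorem first_integral_generalized_eigenvector_general
    (n : ℕ) (A : Matrix (Fin n) (Fin n) ℝ)
    (ν₀ ν₁ : Fin n → ℝ) (lam : ℝ)
    (heig : Aᵀ.mulVec ν₀ = lam • ν₀)
    (hgen : Aᵀ.mulVec ν₁ - lam • ν₁ = ν₀) :
    ∀ x : Fin n → ℝ, ν₀ ⬝ᵥ x ≠ 0 →
      fderiv ℝ (fun y => (ν₀ ⬝ᵥ y) * Real.exp (-lam * ((ν₁ ⬝ᵥ y) / (ν₀ ⬝ᵥ y))))
        x (A.mulVec x) = 0 := fun x hx =>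
  fderiv_mul_exp_div_apply_eq_zero (hasFDerivAt_dotProduct_s11 ν₀ x) (hasFDerivAt_dotProduct_s11 ν₁ x)
    hx (dotProduct_mulVec_of_transpose_mulVec_eq_smul heig x)
    (dotProduct_mulVec_of_transpose_mulVec_sub_smul_eq hgen x)

/-- Theorem 1.5: if `λ` is a real eigenvalue of `B = Aᵀ` with eigenvector `ν⁰` and
first-order generalized eigenvector `ν¹` (`(B − λI)ν¹ = ν⁰`), then
`F(x) = (ν⁰·x)·exp(−λ·(ν¹·x)/(ν⁰·x))` is an autonomous first integral of
`dx/dt = Ax` wherever `ν⁰·x ≠ 0`. -/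
theorem first_integral_generalized_eigenvector
    (n : ℕ) (A : Matrix (Fin n) (Fin n) ℝ)
    (ν₀ ν₁ : Fin n → ℝ) (lam : ℝ) (hν₀ : ν₀ ≠ 0)
    (heig : Aᵀ.mulVec ν₀ = lam • ν₀)
    (hgen : Aᵀ.mulVec ν₁ - lam • ν₁ = ν₀) :
    ∀ x : Fin n → ℝ, ν₀ ⬝ᵥ x ≠ 0 →
      fderiv ℝ (fun y => (ν₀ ⬝ᵥ y) * Real.exp (-lam * ((ν₁ ⬝ᵥ y) / (ν₀ ⬝ᵥ y))))
        x (A.mulVec x) = 0 :=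
  first_integral_generalized_eigenvector_general n A ν₀ ν₁ lam heig hgen
end
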